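/- With T = ℂⁿ/Λ, S = F/Λ_S, and m as above, for any 0 < r ≤ √m / 2 the image of the map φ_r : S × B_{F^⊥}(r) → T equals the geodesic tubular neighborhood W_r := {x ∈ T : d_T(x, S) < r}, where d_T(x, S) = min{‖q_{F^⊥}(z)‖ : z ∈ ℂⁿ, p(z) = x} and p : ℂⁿ → T is the quotient map. In particular φ_r is a bijection from S × B_{F^⊥}(r) onto W_r. -/

import Mathlib

/-!
A point `v` of `ℂⁿ` splits uniquely as `y + z` with `y ∈ F` and `z ∈ Fᗮ`, and then `z` is the
projection of `v` to `Fᗮ`; this identifies the image of `φ_r` with `W_r`. If two points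
`y + z`, `y' + z'` with `‖z‖, ‖z'‖ < r` differ by a lattice vector `l`, then the projection of `l`
to `Fᗮ` is `z' - z`, of length `< 2r ≤ √m`. By the definition of `m` this forces `l ∈ F`, hence
`z = z'` and `y - y' = -l ∈ Λ`.
-/

namespace Submodule

variable {𝕜 E : Type*} [RCLike 𝕜] [NormedAddCommGroup E] [InnerProductSpace 𝕜 E]
  {K : Submodule 𝕜 E}

theorem orthogonalProjectionOnto_orthogonal_add [Kᗮ.HasOrthogonalProjection] {y z : E}
    (hy : y ∈ K) (hz : z ∈ Kᗮ) : (Kᗮ.orthogonalProjectionOnto (y + z) : E) = z := by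
  rw [map_add, orthogonalProjectionOnto_apply_of_mem_orthogonal (le_orthogonal_orthogonal K hy),
    zero_add, orthogonalProjectionOnto_mem_subspace_eq_self ⟨z, hz⟩]

variable (K) in
/-- The constant `m` of the statement. -/
noncomputable def orthogonalGapSq (Λ : AddSubgroup E) [Kᗮ.HasOrthogonalProjection] : ℝ :=
  sInf {x : ℝ | ∃ l ∈ Λ, l ∉ K ∧ x = ‖(Kᗮ.orthogonalProjectionOnto l : E)‖ ^ 2}

theorem mem_of_sq_norm_lt_orthogonalGapSq [Kᗮ.HasOrthogonalProjection] {Λ : AddSubgroup E}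
    {l : E} (hl : l ∈ Λ) (h : ‖(Kᗮ.orthogonalProjectionOnto l : E)‖ ^ 2 < orthogonalGapSq K Λ) :
    l ∈ K := by
  by_contra hlK
  have hbdd : BddBelow {x : ℝ | ∃ l ∈ Λ, l ∉ K ∧
      x = ‖(Kᗮ.orthogonalProjectionOnto l : E)‖ ^ 2} :=
    ⟨0, by rintro x ⟨l, -, -, rfl⟩; positivity⟩
  exact h.not_ge (csInf_le hbdd ⟨l, hl, hlK, rfl⟩)

end Submodule

namespace QuotientAddGroup

open Submodule

variable {𝕜 E : Type*} [RCLike 𝕜] [NormedAddCommGroup E] [InnerProductSpace 𝕜 E]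

theorem setOf_mk_add_orthogonal_eq (Λ : AddSubgroup E) (K : Submodule 𝕜 E)
    [K.HasOrthogonalProjection] (r : ℝ) :
    {x : E ⧸ Λ | ∃ y ∈ K, ∃ z ∈ Kᗮ, ‖z‖ < r ∧ x = mk (y + z)}
      = {x : E ⧸ Λ | ∃ v : E, ‖(Kᗮ.orthogonalProjectionOnto v : E)‖ < r ∧ x = mk v} := by
  ext x
  constructor
  · rintro ⟨y, hy, z, hz, hzr, rfl⟩
    exact ⟨y + z, by rwa [orthogonalProjectionOnto_orthogonal_add hy hz], rfl⟩
  · rintro ⟨v, hvr, rfl⟩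
    obtain ⟨y, hy, z, hz, rfl⟩ := K.exists_add_mem_mem_orthogonal v
    rw [orthogonalProjectionOnto_orthogonal_add hy hz] at hvr
    exact ⟨y, hy, z, hz, hvr, rfl⟩

theorem eq_of_mk_add_orthogonal_eq {Λ : AddSubgroup E} {K : Submodule 𝕜 E}
    [Kᗮ.HasOrthogonalProjection] {r : ℝ} (hr : r ≤ √(orthogonalGapSq K Λ) / 2)
    {y y' z z' : E} (hy : y ∈ K) (hy' : y' ∈ K) (hz : z ∈ Kᗮ) (hz' : z' ∈ Kᗮ)
    (hzr : ‖z‖ < r) (hzr' : ‖z'‖ < r) (h : (mk (y + z) : E ⧸ Λ) = mk (y' + z')) :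
    y - y' ∈ Λ ∧ z = z' := by
  set l := -(y + z) + (y' + z')
  have hlΛ : l ∈ Λ := QuotientAddGroup.eq.mp h
  have hproj : (Kᗮ.orthogonalProjectionOnto l : E) = z' - z := by
    rw [show l = (y' - y) + (z' - z) by simp only [l]; abel,
      orthogonalProjectionOnto_orthogonal_add (sub_mem hy' hy) (sub_mem hz' hz)]
  have hlt : ‖z' - z‖ < √(orthogonalGapSq K Λ) := by linarith [norm_sub_le z' z]
  have hlK : l ∈ K := mem_of_sq_norm_lt_orthogonalGapSq hlΛ <| by
    rwa [hproj, ← Real.lt_sqrt (norm_nonneg _)]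
  have hzz : z = z' := by
    have h0 := orthogonalProjectionOnto_apply_of_mem_orthogonal (le_orthogonal_orthogonal K hlK)
    rw [← coe_eq_zero, hproj, sub_eq_zero] at h0
    exact h0.symm
  refine ⟨?_, hzz⟩
  rw [show y - y' = -l by simp only [l, hzz]; abel]
  exact neg_mem hlΛ

end QuotientAddGroup

theorem stmt_5_general (n : ℕ) (Λ : AddSubgroup (EuclideanSpace ℂ (Fin n)))
    (F : Submodule ℂ (EuclideanSpace ℂ (Fin n)))
    (m : ℝ)
    (hm : m = sInf {x : ℝ | ∃ l ∈ Λ, l ∉ F ∧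
        x = ‖(Submodule.orthogonalProjectionOnto Fᗮ l : EuclideanSpace ℂ (Fin n))‖ ^ 2})
    (r : ℝ) (hr2 : r ≤ Real.sqrt m / 2) :
    -- the image of φ_r equals W_r:
    {x : EuclideanSpace ℂ (Fin n) ⧸ Λ | ∃ z1 ∈ F, ∃ z2 ∈ Fᗮ, ‖z2‖ < r ∧
        x = QuotientAddGroup.mk (z1 + z2)}
      = {x : EuclideanSpace ℂ (Fin n) ⧸ Λ | ∃ z : EuclideanSpace ℂ (Fin n),
          ‖(Submodule.orthogonalProjectionOnto Fᗮ z : EuclideanSpace ℂ (Fin n))‖ < r ∧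
          x = QuotientAddGroup.mk z}
    -- and φ_r is injective, hence a bijection onto W_r:
    ∧ (∀ z1 ∈ F, ∀ z1' ∈ F, ∀ z2 ∈ Fᗮ, ∀ z2' ∈ Fᗮ, ‖z2‖ < r → ‖z2'‖ < r →
        (QuotientAddGroup.mk (z1 + z2) : EuclideanSpace ℂ (Fin n) ⧸ Λ)
          = QuotientAddGroup.mk (z1' + z2') → (z1 - z1' ∈ Λ ∧ z2 = z2')) := by
  subst hm
  exact ⟨QuotientAddGroup.setOf_mk_add_orthogonal_eq Λ F r,
    fun _ hy _ hy' _ hz _ hz' => QuotientAddGroup.eq_of_mk_add_orthogonal_eq hr2 hy hy' hz hz'⟩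

theorem stmt_5 (n : ℕ) (Λ : AddSubgroup (EuclideanSpace ℂ (Fin n)))
    (hdisc : DiscreteTopology Λ)
    (hrank : Submodule.span ℝ (Λ : Set (EuclideanSpace ℂ (Fin n))) = ⊤)
    (F : Submodule ℂ (EuclideanSpace ℂ (Fin n)))
    (hS : Submodule.span ℝ ((Λ : Set (EuclideanSpace ℂ (Fin n))) ∩ (F : Set (EuclideanSpace ℂ (Fin n))))
        = F.restrictScalars ℝ)
    (m : ℝ)
    (hm : m = sInf {x : ℝ | ∃ l ∈ Λ, l ∉ F ∧
        x = ‖(Submodule.orthogonalProjectionOnto Fᗮ l : EuclideanSpace ℂ (Fin n))‖ ^ 2})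
    (r : ℝ) (hr : 0 < r) (hr2 : r ≤ Real.sqrt m / 2) :
    -- the image of φ_r equals W_r:
    {x : EuclideanSpace ℂ (Fin n) ⧸ Λ | ∃ z1 ∈ F, ∃ z2 ∈ Fᗮ, ‖z2‖ < r ∧
        x = QuotientAddGroup.mk (z1 + z2)}
      = {x : EuclideanSpace ℂ (Fin n) ⧸ Λ | ∃ z : EuclideanSpace ℂ (Fin n),
          ‖(Submodule.orthogonalProjectionOnto Fᗮ z : EuclideanSpace ℂ (Fin n))‖ < r ∧
          x = QuotientAddGroup.mk z}
    -- and φ_r is injective, hence a bijection onto W_r: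
    ∧ (∀ z1 ∈ F, ∀ z1' ∈ F, ∀ z2 ∈ Fᗮ, ∀ z2' ∈ Fᗮ, ‖z2‖ < r → ‖z2'‖ < r →
        (QuotientAddGroup.mk (z1 + z2) : EuclideanSpace ℂ (Fin n) ⧸ Λ)
          = QuotientAddGroup.mk (z1' + z2') → (z1 - z1' ∈ Λ ∧ z2 = z2')) :=
  stmt_5_general n Λ F m hm r hr2
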